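/- For the star K_{1,3} (the claw), QEC(K_{1,3}) = -1/2. -/
import Mathlib


/-- QEC(K_{1,3}) = -1/2. Vertex 0 is the center; leaves are at
mutual distance 2 and at distance 1 from the center. -/
theorem qec_claw :
    IsGreatest {x : ℝ | ∃ f : Fin 4 → ℝ,
      (∑ i, f i ^ 2) = 1 ∧ (∑ i, f i) = 0 ∧
      x = ∑ i, ∑ j,
        (if i = j then (0 : ℝ) else if i = 0 ∨ j = 0 then 1 else 2) * f i * f j}
      (-1/2) := by
  constructor
  · refine ⟨![Real.sqrt 3 / 2, -Real.sqrt 3 / 6, -Real.sqrt 3 / 6, -Real.sqrt 3 / 6], ?_, ?_, ?_⟩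
    · have h3 : Real.sqrt 3 ^ 2 = 3 := Real.sq_sqrt (by norm_num)
      simp [Fin.sum_univ_four]
      nlinarith [h3]
    · simp [Fin.sum_univ_four]
      ring
    · have h3 : Real.sqrt 3 ^ 2 = 3 := Real.sq_sqrt (by norm_num)
      simp [Fin.sum_univ_four, show (3:Fin 4) ≠ 0 from by decide, show (3:Fin 4) ≠ 1 from by decide, show (3:Fin 4) ≠ 2 from by decide, show (0:Fin 4) ≠ 3 from by decide, show (1:Fin 4) ≠ 3 from by decide, show (2:Fin 4) ≠ 3 from by decide]
      nlinarith [h3]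
  · rintro x ⟨f, h1, h2, rfl⟩
    simp only [Fin.sum_univ_four, Fin.reduceEq, if_true, if_false, reduceIte, or_self, or_false, false_or] at h1 h2 ⊢
    have h0 : f 0 = -(f 1 + f 2 + f 3) := by linarith
    rw [h0] at h1 ⊢
    nlinarith [sq_nonneg (f 1 - f 2), sq_nonneg (f 1 - f 3), sq_nonneg (f 2 - f 3), h1]
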